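/- arXiv:1308.1498 — 6 statements merged into one kernel-verified Lean document; each statement's English description precedes it below -/
import Mathlib

section
/- Let (H_φ, J_φ) be a Krein space (J_φ bounded with J_φ = J_φ* = J_φ⁻¹), π_φ a J_φ-unitary representation of G on H_φ (π_φ(g⁻¹) = J_φ π_φ(g)* J_φ, π_φ(e) = id), and V_φ : H → H_φ bounded. Then the following are equivalent: (i) J_φ π_φ(g) V_φ = π_φ(α(g)) V_φ for all g ∈ G; (ii) V_φ* π_φ(g)* π_φ(g') V_φ = V_φ* π_φ(α(g⁻¹)g') V_φ for all g, g' ∈ G and J_φ V_φ = V_φ. (For (ii) ⇒ (i), additionally assume the closed span of π_φ(G)V_φ H is all of H_φ.) -/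
open scoped ComplexOrder

noncomputable section

def IsInvolution (G : Type*) [Group G] (α : G → G) : Prop :=
  (∀ g, α (α g) = g) ∧ α 1 = 1 ∧ ∀ g : G, α g⁻¹ = (α g)⁻¹

def IsAlphaCP {G : Type*} [Group G] (α : G → G)
    {H : Type*} [NormedAddCommGroup H] [InnerProductSpace ℂ H] [CompleteSpace H]
    (φ : G → H →L[ℂ] H) : Prop :=
  (∀ g₁ g₂ : G, φ (α g₁ * α g₂) = φ (α (g₁ * g₂)) ∧ φ (α (g₁ * g₂)) = φ (g₁ * g₂)) ∧
  (∀ (n : ℕ) (g : Fin n → G) (ξ : Fin n → H),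
    0 ≤ ∑ i, ∑ j, (inner ℂ (φ ((α (g i))⁻¹ * g j) (ξ j)) (ξ i) : ℂ)) ∧
  (∃ K > (0 : ℝ), ∀ (n : ℕ) (g : Fin n → G) (ξ : Fin n → H),
    ∑ i, ∑ j, (inner ℂ (((ContinuousLinearMap.adjoint (φ (g i))) ∘L φ (g j)) (ξ j)) (ξ i) : ℂ) ≤
      (K : ℂ) * ∑ i, ∑ j, (inner ℂ (φ ((α (g i))⁻¹ * g j) (ξ j)) (ξ i) : ℂ)) ∧
  (∀ g : G, ∃ M > (0 : ℝ), ∀ (n : ℕ) (gs : Fin n → G) (ξ : Fin n → H),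
    ∑ i, ∑ j, (inner ℂ (φ ((α (g * gs i))⁻¹ * (g * gs j)) (ξ j)) (ξ i) : ℂ) ≤
      (M : ℂ) * ∑ i, ∑ j, (inner ℂ (φ ((α (gs i))⁻¹ * gs j) (ξ j)) (ξ i) : ℂ))

/-! Since `J` is a unitary involution, `(π g V)* (π g' V) = (J π g V)* (J π g' V)`; under (i) this is
`V* π(α g)* π(α g') V`, and `J`-unitarity of `π` together with `J V = V` collapses it to
`V* π(α g⁻¹ g') V`. Conversely, under (ii) both `J π g V` and `π (α g) V` have the Gram pairing
`V* π(g'⁻¹ g) V` against every `π g' V`, so they agree because these ranges span a dense subspace. -/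

section

open ContinuousLinearMap Submodule

theorem eq_of_inner_left_of_topologicalClosure_span_eq_top {𝕜 F : Type*} [RCLike 𝕜]
    [NormedAddCommGroup F] [InnerProductSpace 𝕜 F] {S : Set F}
    (hS : (span 𝕜 S).topologicalClosure = ⊤) {x y : F}
    (h : ∀ v ∈ S, inner 𝕜 x v = inner 𝕜 y v) : x = y := by
  have hspan : span 𝕜 S ≤ LinearMap.ker (innerₛₗ 𝕜 (x - y)) :=
    span_le.mpr fun v hv => by simp [h v hv]
  refine (dense_iff_topologicalClosure_eq_top.mpr hS).eq_of_inner_left 𝕜 fun v hv => ?_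
  simpa [inner_sub_left, sub_eq_zero] using hspan hv

variable {𝕜 E K G : Type*} [RCLike 𝕜] [Group G]
  [NormedAddCommGroup E] [InnerProductSpace 𝕜 E] [CompleteSpace E]
  [NormedAddCommGroup K] [InnerProductSpace 𝕜 K] [CompleteSpace K]

theorem ContinuousLinearMap.ext_of_adjoint_comp_eq {ι D : Type*} [NormedAddCommGroup D]
    [InnerProductSpace 𝕜 D] (T : ι → E →L[𝕜] K)
    (hT : (span 𝕜 {x | ∃ i ξ, x = T i ξ}).topologicalClosure = ⊤) {A B : D →L[𝕜] K}
    (h : ∀ i, adjoint (T i) ∘L A = adjoint (T i) ∘L B) : A = B := by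
  ext ξ
  refine eq_of_inner_left_of_topologicalClosure_span_eq_top hT ?_
  rintro _ ⟨i, η, rfl⟩
  rw [← inner_conj_symm, ← adjoint_inner_right, ← comp_apply, h i, comp_apply,
    adjoint_inner_right, inner_conj_symm]

variable {J : K →L[𝕜] K} {π : G → K →L[𝕜] K} {V : E →L[𝕜] K}

theorem adjoint_eq_comp_inv_comp (hJinv : J ∘L J = 1)
    (hπJ : ∀ g : G, π g⁻¹ = J ∘L adjoint (π g) ∘L J) (g : G) :
    adjoint (π g) = J ∘L π g⁻¹ ∘L J := by
  simp only [hπJ, ← comp_assoc, hJinv]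
  simp only [comp_assoc, hJinv]
  rfl

theorem adjoint_comp_comp_comp_eq (hJsa : adjoint J = J) (hJinv : J ∘L J = 1)
    (A B : E →L[𝕜] K) : adjoint (J ∘L A) ∘L J ∘L B = adjoint A ∘L B := by
  rw [adjoint_comp, hJsa, comp_assoc, ← comp_assoc J, hJinv]
  rfl

theorem adjoint_comp_of_comp_eq_self (hJsa : adjoint J = J) (hJV : J ∘L V = V) :
    adjoint V ∘L J = adjoint V := by
  conv_lhs => rw [← hJsa, ← adjoint_comp, hJV]

theorem adjoint_comp_adjoint_comp_eq (hJsa : adjoint J = J) (hJinv : J ∘L J = 1)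
    (hπJ : ∀ g : G, π g⁻¹ = J ∘L adjoint (π g) ∘L J) (hJV : J ∘L V = V) (g : G) :
    adjoint V ∘L adjoint (π g) ∘L V = adjoint V ∘L π g⁻¹ ∘L V := by
  rw [adjoint_eq_comp_inv_comp hJinv hπJ, comp_assoc, comp_assoc, hJV, ← comp_assoc,
    adjoint_comp_of_comp_eq_self hJsa hJV]

variable {α : G → G}

theorem gram_eq_of_intertwine (hα : IsInvolution G α) (hJsa : adjoint J = J)
    (hJinv : J ∘L J = 1) (hπmul : ∀ g g', π (g * g') = π g ∘L π g')
    (hπJ : ∀ g : G, π g⁻¹ = J ∘L adjoint (π g) ∘L J) (hJV : J ∘L V = V)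
    (h : ∀ g : G, J ∘L π g ∘L V = π (α g) ∘L V) (g g' : G) :
    adjoint V ∘L adjoint (π g) ∘L π g' ∘L V = adjoint V ∘L π (α g⁻¹ * g') ∘L V := by
  obtain ⟨hα2, -, hαinv⟩ := hα
  calc adjoint V ∘L adjoint (π g) ∘L π g' ∘L V
      = adjoint (J ∘L π g ∘L V) ∘L J ∘L π g' ∘L V := by
        rw [adjoint_comp_comp_comp_eq hJsa hJinv, adjoint_comp, comp_assoc]
    _ = adjoint V ∘L adjoint (π (α g)) ∘L π (α g') ∘L V := by
        rw [h, h, adjoint_comp, comp_assoc]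
    _ = adjoint V ∘L J ∘L π (α g⁻¹) ∘L J ∘L π (α g') ∘L V := by
        rw [adjoint_eq_comp_inv_comp hJinv hπJ, hαinv]
        simp only [comp_assoc]
    _ = adjoint V ∘L π (α g⁻¹ * g') ∘L V := by
        rw [h, hα2, ← comp_assoc, adjoint_comp_of_comp_eq_self hJsa hJV, hπmul, comp_assoc]

theorem intertwine_of_gram_eq (hα : IsInvolution G α) (hJsa : adjoint J = J)
    (hJinv : J ∘L J = 1) (hπmul : ∀ g g', π (g * g') = π g ∘L π g')
    (hπJ : ∀ g : G, π g⁻¹ = J ∘L adjoint (π g) ∘L J) (hJV : J ∘L V = V)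
    (hdense : (span 𝕜 {x | ∃ g ξ, x = π g (V ξ)}).topologicalClosure = ⊤)
    (hgram : ∀ g g' : G, adjoint V ∘L adjoint (π g) ∘L π g' ∘L V =
      adjoint V ∘L π (α g⁻¹ * g') ∘L V) (g : G) :
    J ∘L π g ∘L V = π (α g) ∘L V := by
  obtain ⟨hα2, -, hαinv⟩ := hα
  refine ext_of_adjoint_comp_eq (fun g' => π g' ∘L V) hdense fun g' => ?_
  calc adjoint (π g' ∘L V) ∘L J ∘L π g ∘L V
      = adjoint V ∘L π (g'⁻¹ * g) ∘L V := by
        rw [adjoint_comp, adjoint_eq_comp_inv_comp hJinv hπJ]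
        simp only [comp_assoc]
        rw [← comp_assoc J J, hJinv, ← comp_assoc, adjoint_comp_of_comp_eq_self hJsa hJV, hπmul]
        rfl
    _ = adjoint V ∘L adjoint (π (g⁻¹ * g')) ∘L V := by
        rw [adjoint_comp_adjoint_comp_eq hJsa hJinv hπJ hJV, mul_inv_rev, inv_inv]
    _ = adjoint (adjoint V ∘L adjoint (π (α g)) ∘L π g' ∘L V) := by
        rw [hgram, ← hαinv, hα2]
        simp only [adjoint_comp, adjoint_adjoint, comp_assoc]
    _ = adjoint (π g' ∘L V) ∘L π (α g) ∘L V := by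
        simp only [adjoint_comp, adjoint_adjoint, comp_assoc]

end

open ContinuousLinearMap in
theorem krein_intertwine_iff {G : Type*} [Group G] (α : G → G)
    {H : Type*} [NormedAddCommGroup H] [InnerProductSpace ℂ H] [CompleteSpace H]
    {K : Type*} [NormedAddCommGroup K] [InnerProductSpace ℂ K] [CompleteSpace K]
    (hα : IsInvolution G α)
    (J : K →L[ℂ] K) (hJsa : adjoint J = J) (hJinv : J ∘L J = 1)
    (π : G → K →L[ℂ] K) (hπ1 : π 1 = 1) (hπmul : ∀ g g', π (g * g') = π g ∘L π g')
    (hπJ : ∀ g : G, π g⁻¹ = J ∘L adjoint (π g) ∘L J)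
    (V : H →L[ℂ] K) :
    ((∀ g : G, J ∘L π g ∘L V = π (α g) ∘L V) →
      ((∀ g g' : G, adjoint V ∘L adjoint (π g) ∘L π g' ∘L V =
          adjoint V ∘L π (α g⁻¹ * g') ∘L V) ∧ J ∘L V = V)) ∧
    ((Submodule.span ℂ {x : K | ∃ g ξ, x = π g (V ξ)}).topologicalClosure = ⊤ →
      ((∀ g g' : G, adjoint V ∘L adjoint (π g) ∘L π g' ∘L V =
          adjoint V ∘L π (α g⁻¹ * g') ∘L V) ∧ J ∘L V = V) →
      ∀ g : G, J ∘L π g ∘L V = π (α g) ∘L V) := by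
  refine ⟨fun h => ?_, fun hdense ⟨hgram, hJV⟩ =>
    intertwine_of_gram_eq hα hJsa hJinv hπmul hπJ hJV hdense hgram⟩
  have hJV : J ∘L V = V := by simpa [hπ1, hα.2.1, one_def] using h 1
  exact ⟨gram_eq_of_intertwine hα hJsa hJinv hπmul hπJ hJV h, hJV⟩
end
end

section
/- Let G be a group with involution α, (K, J) a Krein space, π a J-unitary representation of G on K with each π(g) bounded, and V : H → K a bounded linear operator such that the closed span of {π(g)Vξ : g ∈ G, ξ ∈ H} equals K and J π(g) V = π(α(g)) V for all g ∈ G. Then the map φ : G → L(H) defined by φ(g) = V* π(g) V is an α-completely positive map. -/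
open scoped ComplexOrder

noncomputable section

/-!
The identity `J π(g) V = π(α g) V` gives `V* π(α g) = V* π(g) J`, and with `π(g⁻¹) = J π(g)* J`
this turns `φ((α g)⁻¹ g')` into a Gram kernel:
`⟪φ((α g)⁻¹ g') ξ, η⟫ = ⟪π(g') V ξ, π(g) V η⟫`, the indefinite inner product becoming the
Hilbert one because the two factors of `J` cancel. Hence every sum
`∑ᵢⱼ ⟪φ((α gᵢ)⁻¹ gⱼ) ξⱼ, ξᵢ⟫` equals `‖∑ᵢ π(gᵢ) V ξᵢ‖²`, which is nonnegative and dominates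
`‖V* ∑ᵢ π(gᵢ) V ξᵢ‖²` and `‖π(g) ∑ᵢ π(gᵢ) V ξᵢ‖²` up to the constants `‖V*‖²`, `‖π(g)‖²`.
-/

open ContinuousLinearMap

theorem sum_sum_inner_eq_norm_sq {𝕜 E ι : Type*} [RCLike 𝕜] [NormedAddCommGroup E]
    [InnerProductSpace 𝕜 E] [Fintype ι] (v : ι → E) :
    ∑ i, ∑ j, inner 𝕜 (v j) (v i) = (‖∑ i, v i‖ : 𝕜) ^ 2 := by
  rw [← inner_self_eq_norm_sq_to_K, inner_sum]
  simp_rw [sum_inner]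

theorem ContinuousLinearMap.exists_pos_norm_sq_apply_le {𝕜 E F : Type*}
    [NontriviallyNormedField 𝕜] [SeminormedAddCommGroup E] [SeminormedAddCommGroup F]
    [NormedSpace 𝕜 E] [NormedSpace 𝕜 F] (A : E →L[𝕜] F) :
    ∃ M > (0 : ℝ), ∀ x, ‖A x‖ ^ 2 ≤ M * ‖x‖ ^ 2 := by
  refine ⟨‖A‖ ^ 2 + 1, by positivity, fun x => ?_⟩
  calc ‖A x‖ ^ 2 ≤ (‖A‖ * ‖x‖) ^ 2 := by gcongr; exact A.le_opNorm x
    _ ≤ (‖A‖ ^ 2 + 1) * ‖x‖ ^ 2 := by rw [mul_pow]; gcongr; linarith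

theorem sum_sum_inner_adjoint_comp_eq_norm_sq {𝕜 E F ι : Type*} [RCLike 𝕜]
    [NormedAddCommGroup E] [InnerProductSpace 𝕜 E] [CompleteSpace E]
    [NormedAddCommGroup F] [InnerProductSpace 𝕜 F] [CompleteSpace F] [Fintype ι]
    (A : ι → E →L[𝕜] F) (x : ι → E) :
    ∑ i, ∑ j, inner 𝕜 ((adjoint (A i) ∘L A j) (x j)) (x i) = (‖∑ i, A i (x i)‖ : 𝕜) ^ 2 := by
  simp only [comp_apply, adjoint_inner_left]
  exact sum_sum_inner_eq_norm_sq _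

structure IsJUnitaryRep {𝕜 E : Type*} [RCLike 𝕜] [NormedAddCommGroup E]
    [InnerProductSpace 𝕜 E] [CompleteSpace E] {G : Type*} [Group G]
    (J : E →L[𝕜] E) (π : G → E →L[𝕜] E) : Prop where
  adjoint_J : adjoint J = J
  J_comp_J : J ∘L J = 1
  map_mul : ∀ g g', π (g * g') = π g ∘L π g'
  map_inv : ∀ g, π g⁻¹ = J ∘L adjoint (π g) ∘L J

namespace IsJUnitaryRep

variable {𝕜 E : Type*} [RCLike 𝕜] [NormedAddCommGroup E] [InnerProductSpace 𝕜 E]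
  [CompleteSpace E] {G : Type*} [Group G] {J : E →L[𝕜] E} {π : G → E →L[𝕜] E}

theorem J_J_apply (hπ : IsJUnitaryRep J π) (x : E) : J (J x) = x :=
  congr($hπ.J_comp_J x)

theorem inner_J_left (hπ : IsJUnitaryRep J π) (x y : E) : inner 𝕜 (J x) y = inner 𝕜 x (J y) := by
  simpa [hπ.adjoint_J] using adjoint_inner_left J y x

theorem adjoint_map (hπ : IsJUnitaryRep J π) (g : G) : adjoint (π g) = J ∘L π g⁻¹ ∘L J := by
  ext x
  simp [hπ.map_inv, hπ.J_J_apply]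

variable {α : G → G} {H : Type*} [NormedAddCommGroup H] [InnerProductSpace 𝕜 H]
  [CompleteSpace H] {V : H →L[𝕜] E}

theorem adjoint_comp_map_alpha (hπ : IsJUnitaryRep J π) (hα : ∀ g, α g⁻¹ = (α g)⁻¹)
    (hJV : ∀ ξ, J (V ξ) = V ξ) (hcomm : ∀ g ξ, π (α g) (V ξ) = J (π g (V ξ))) (g : G) :
    adjoint V ∘L π (α g) = adjoint V ∘L π g ∘L J := by
  have h : adjoint (π (α g)) ∘L V = J ∘L adjoint (π g) ∘L V := by
    ext ξ
    simp [hπ.adjoint_map, hJV, ← hα, hcomm, hπ.J_J_apply]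
  simpa [adjoint_comp, hπ.adjoint_J, comp_assoc] using congr(adjoint $h)

theorem compress_map_alpha (hπ : IsJUnitaryRep J π) (hα : ∀ g, α g⁻¹ = (α g)⁻¹)
    (hJV : ∀ ξ, J (V ξ) = V ξ) (hcomm : ∀ g ξ, π (α g) (V ξ) = J (π g (V ξ))) (g : G) :
    adjoint V ∘L π (α g) ∘L V = adjoint V ∘L π g ∘L V := by
  ext ξ
  simpa [hJV] using congr($(hπ.adjoint_comp_map_alpha hα hJV hcomm g) (V ξ))

theorem compress_map_alpha_mul_alpha (hπ : IsJUnitaryRep J π) (hα : ∀ g, α g⁻¹ = (α g)⁻¹)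
    (hJV : ∀ ξ, J (V ξ) = V ξ) (hcomm : ∀ g ξ, π (α g) (V ξ) = J (π g (V ξ))) (g₁ g₂ : G) :
    adjoint V ∘L π (α g₁ * α g₂) ∘L V = adjoint V ∘L π (g₁ * g₂) ∘L V := by
  ext ξ
  have h := congr($(hπ.adjoint_comp_map_alpha hα hJV hcomm g₁) (π (α g₂) (V ξ)))
  simp only [comp_apply] at h
  simp only [comp_apply, hπ.map_mul]
  rw [h, hcomm, hπ.J_J_apply]

theorem inner_compress_alpha_inv_mul (hπ : IsJUnitaryRep J π) (hα : ∀ g, α g⁻¹ = (α g)⁻¹)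
    (hJV : ∀ ξ, J (V ξ) = V ξ) (hcomm : ∀ g ξ, π (α g) (V ξ) = J (π g (V ξ))) (g g' : G)
    (ξ η : H) :
    inner 𝕜 ((adjoint V ∘L π ((α g)⁻¹ * g') ∘L V) ξ) η = inner 𝕜 (π g' (V ξ)) (π g (V η)) := by
  have h := congr($(hπ.adjoint_comp_map_alpha hα hJV hcomm g⁻¹) (π g' (V ξ)))
  simp only [comp_apply] at h
  rw [← hα, hπ.map_mul, comp_apply, comp_apply, comp_apply, h, adjoint_inner_left,
    hπ.map_inv, comp_apply, comp_apply, hπ.J_J_apply, hπ.inner_J_left, hJV, adjoint_inner_left]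

theorem sum_sum_inner_compress_alpha_inv_mul (hπ : IsJUnitaryRep J π)
    (hα : ∀ g, α g⁻¹ = (α g)⁻¹) (hJV : ∀ ξ, J (V ξ) = V ξ)
    (hcomm : ∀ g ξ, π (α g) (V ξ) = J (π g (V ξ))) {ι : Type*} [Fintype ι] (g : ι → G)
    (ξ : ι → H) :
    ∑ i, ∑ j, inner 𝕜 ((adjoint V ∘L π ((α (g i))⁻¹ * g j) ∘L V) (ξ j)) (ξ i) =
      (‖∑ i, π (g i) (V (ξ i))‖ : 𝕜) ^ 2 := by
  simp_rw [hπ.inner_compress_alpha_inv_mul hα hJV hcomm]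
  exact sum_sum_inner_eq_norm_sq _

end IsJUnitaryRep

open ContinuousLinearMap in
theorem alphaCP_of_krein_rep_general {G : Type*} [Group G] (α : G → G)
    {H : Type*} [NormedAddCommGroup H] [InnerProductSpace ℂ H] [CompleteSpace H]
    {K : Type*} [NormedAddCommGroup K] [InnerProductSpace ℂ K] [CompleteSpace K]
    (hα : IsInvolution G α)
    (J : K →L[ℂ] K) (hJsa : adjoint J = J) (hJinv : J ∘L J = 1)
    (π : G → K →L[ℂ] K) (hπ1 : π 1 = 1) (hπmul : ∀ g g', π (g * g') = π g ∘L π g')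
    (hπJ : ∀ g : G, π g⁻¹ = J ∘L adjoint (π g) ∘L J)
    (V : H →L[ℂ] K)
    (hcomm : ∀ g : G, J ∘L π g ∘L V = π (α g) ∘L V) :
    IsAlphaCP α (fun g => adjoint V ∘L π g ∘L V) := by
  obtain ⟨-, hα1, hαinv⟩ := hα
  have hπ : IsJUnitaryRep J π := ⟨hJsa, hJinv, hπmul, hπJ⟩
  have hJV (ξ : H) : J (V ξ) = V ξ := by simpa [hα1, hπ1] using congr($(hcomm 1) ξ)
  have hcomm' (g : G) (ξ : H) : π (α g) (V ξ) = J (π g (V ξ)) := congr($(hcomm g) ξ).symm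
  have hgram (n : ℕ) := hπ.sum_sum_inner_compress_alpha_inv_mul (ι := Fin n) hαinv hJV hcomm'
  refine ⟨fun g₁ g₂ => ?_, fun n g ξ => ?_, ?_, fun g => ?_⟩
  · simp only [hπ.compress_map_alpha_mul_alpha hαinv hJV hcomm',
      hπ.compress_map_alpha hαinv hJV hcomm', and_self]
  · rw [hgram, ← RCLike.ofReal_pow]
    exact RCLike.ofReal_nonneg.mpr (sq_nonneg _)
  · obtain ⟨M, hM, hV⟩ := (adjoint V).exists_pos_norm_sq_apply_le
    refine ⟨M, hM, fun n g ξ => ?_⟩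
    rw [sum_sum_inner_adjoint_comp_eq_norm_sq, hgram]
    simp only [comp_apply, ← map_sum, RCLike.ofReal_eq_complex_ofReal]
    exact_mod_cast hV _
  · obtain ⟨M, hM, hπg⟩ := (π g).exists_pos_norm_sq_apply_le
    refine ⟨M, hM, fun n gs ξ => ?_⟩
    rw [hgram, hgram]
    simp only [hπmul, comp_apply, ← map_sum, RCLike.ofReal_eq_complex_ofReal]
    exact_mod_cast hπg _

open ContinuousLinearMap in
theorem alphaCP_of_krein_rep {G : Type*} [Group G] (α : G → G)
    {H : Type*} [NormedAddCommGroup H] [InnerProductSpace ℂ H] [CompleteSpace H]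
    {K : Type*} [NormedAddCommGroup K] [InnerProductSpace ℂ K] [CompleteSpace K]
    (hα : IsInvolution G α)
    (J : K →L[ℂ] K) (hJsa : adjoint J = J) (hJinv : J ∘L J = 1)
    (π : G → K →L[ℂ] K) (hπ1 : π 1 = 1) (hπmul : ∀ g g', π (g * g') = π g ∘L π g')
    (hπJ : ∀ g : G, π g⁻¹ = J ∘L adjoint (π g) ∘L J)
    (V : H →L[ℂ] K)
    (hmin : (Submodule.span ℂ {x : K | ∃ g ξ, x = π g (V ξ)}).topologicalClosure = ⊤)
    (hcomm : ∀ g : G, J ∘L π g ∘L V = π (α g) ∘L V) :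
    IsAlphaCP α (fun g => adjoint V ∘L π g ∘L V) :=
  alphaCP_of_krein_rep_general α hα J hJsa hJinv π hπ1 hπmul hπJ V hcomm
end
end

section
/- There exist Krein spaces and J-unitary representations for which the conditions [π(G)VH] = K and V*π(g)*π(g')V = V*π(α(g⁻¹)g')V do NOT imply that g ↦ V*π(g)V is α-completely positive. Concretely: on G = ℤ with α(n) = -n, K = ℂ² with J(x,y) = (y,x), π(n)(x,y) = (eⁿx, e⁻ⁿy), and V(x,y) = (x−y, y), one has [π(ℤ)Vℂ²] = ℂ² and V*π(n)*π(m)V = V*π(n+m)V for all n,m ∈ ℤ, yet the map φ(n) = V*π(n)V satisfies φ(1) ≠ φ(−1), so φ is not α-completely positive. -/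
open scoped ComplexOrder

noncomputable section

noncomputable def Jex : EuclideanSpace ℂ (Fin 2) →L[ℂ] EuclideanSpace ℂ (Fin 2) :=
  Matrix.toEuclideanCLM (𝕜 := ℂ) !![0, 1; 1, 0]

noncomputable def piEx (g : Multiplicative ℤ) :
    EuclideanSpace ℂ (Fin 2) →L[ℂ] EuclideanSpace ℂ (Fin 2) :=
  Matrix.toEuclideanCLM (𝕜 := ℂ)
    !![Complex.exp ((Multiplicative.toAdd g : ℤ) : ℂ), 0;
       0, Complex.exp (-((Multiplicative.toAdd g : ℤ) : ℂ))]

noncomputable def Vex : EuclideanSpace ℂ (Fin 2) →L[ℂ] EuclideanSpace ℂ (Fin 2) :=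
  Matrix.toEuclideanCLM (𝕜 := ℂ) !![1, -1; 0, 1]


/-! `φ(n) = V* π(n) V` is the matrix `[[eⁿ, -eⁿ], [-eⁿ, eⁿ + e⁻ⁿ]]`, so `φ(1) ≠ φ(-1)`, whereas
α-complete positivity for `α = (·)⁻¹` forces `φ(-n) = φ(n)`. All other claims are `2 × 2` matrix
identities, transported along the star-algebra isomorphism `Matrix.toEuclideanCLM`; density of the
orbit is immediate because `V` is invertible. -/

theorem isInvolution_inv (G : Type*) [Group G] : IsInvolution G (fun g => g⁻¹) :=
  ⟨inv_inv, inv_one, fun _ => rfl⟩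

theorem IsAlphaCP.apply_alpha {G : Type*} [Group G] {α : G → G}
    {H : Type*} [NormedAddCommGroup H] [InnerProductSpace ℂ H] [CompleteSpace H]
    {φ : G → H →L[ℂ] H} (hφ : IsAlphaCP α φ) (g : G) : φ (α g) = φ g := by
  simpa using (hφ.1 g 1).2

theorem Submodule.topologicalClosure_span_orbit_eq_top {𝕜 G E : Type*} [Ring 𝕜] [Monoid G]
    [AddCommGroup E] [TopologicalSpace E] [Module 𝕜 E] [ContinuousAdd E]
    [ContinuousConstSMul 𝕜 E] (π : G → E →L[𝕜] E) (hπ : π 1 = 1) {V : E →L[𝕜] E}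
    (hV : Function.Surjective V) :
    (span 𝕜 {x | ∃ g ξ, x = π g (V ξ)}).topologicalClosure = ⊤ := by
  refine eq_top_iff.2 fun x _ => le_topologicalClosure _ (subset_span ?_)
  obtain ⟨ξ, rfl⟩ := hV x
  exact ⟨1, ξ, by rw [hπ]; rfl⟩

namespace Matrix

variable {𝕜 n : Type*} [RCLike 𝕜] [Fintype n] [DecidableEq n]

theorem toEuclideanCLM_comp (A B : Matrix n n 𝕜) :
    toEuclideanCLM (𝕜 := 𝕜) A ∘L toEuclideanCLM (𝕜 := 𝕜) B = toEuclideanCLM (𝕜 := 𝕜) (A * B) :=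
  (map_mul _ A B).symm

theorem adjoint_toEuclideanCLM (A : Matrix n n 𝕜) :
    ContinuousLinearMap.adjoint (toEuclideanCLM (𝕜 := 𝕜) A) = toEuclideanCLM (𝕜 := 𝕜) Aᴴ :=
  (map_star _ A).symm

end Matrix

open Complex Matrix ContinuousLinearMap

theorem piEx_eq_diagonal (g : Multiplicative ℤ) :
    piEx g = toEuclideanCLM (𝕜 := ℂ) (diagonal
      ![exp ((Multiplicative.toAdd g : ℤ) : ℂ), exp (-((Multiplicative.toAdd g : ℤ) : ℂ))]) := by
  rw [diagonal_vec2]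
  rfl

theorem piEx_one : piEx 1 = 1 := by
  rw [piEx_eq_diagonal, ← map_one (toEuclideanCLM (𝕜 := ℂ) (n := Fin 2)), ← diagonal_one]
  congr 2
  ext i
  fin_cases i <;> simp

theorem piEx_mul (g g' : Multiplicative ℤ) : piEx (g * g') = piEx g ∘L piEx g' := by
  rw [piEx_eq_diagonal, piEx_eq_diagonal, piEx_eq_diagonal, toEuclideanCLM_comp,
    diagonal_mul_diagonal]
  congr 2
  ext i
  fin_cases i <;> simp [← exp_add, add_comm]

theorem adjoint_piEx (g : Multiplicative ℤ) : adjoint (piEx g) = piEx g := by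
  rw [piEx_eq_diagonal, adjoint_toEuclideanCLM, diagonal_conjTranspose]
  congr 2
  ext i
  fin_cases i <;> simp [← exp_conj]

theorem adjoint_Jex : adjoint Jex = Jex := by
  rw [Jex, adjoint_toEuclideanCLM]
  congr 1
  ext i j
  fin_cases i <;> fin_cases j <;> simp

theorem Jex_comp_Jex : Jex ∘L Jex = 1 := by
  rw [Jex, toEuclideanCLM_comp, ← map_one (toEuclideanCLM (𝕜 := ℂ) (n := Fin 2))]
  congr 1
  ext i j
  fin_cases i <;> fin_cases j <;> simp

theorem piEx_inv (g : Multiplicative ℤ) : piEx g⁻¹ = Jex ∘L adjoint (piEx g) ∘L Jex := by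
  rw [adjoint_piEx, Jex, piEx, piEx, toEuclideanCLM_comp, toEuclideanCLM_comp]
  congr 1
  ext i j
  fin_cases i <;> fin_cases j <;> simp

theorem Vex_surjective : Function.Surjective Vex := by
  have hVW : Vex ∘L toEuclideanCLM (𝕜 := ℂ) !![1, 1; 0, 1] = 1 := by
    rw [Vex, toEuclideanCLM_comp, ← map_one (toEuclideanCLM (𝕜 := ℂ) (n := Fin 2))]
    congr 1
    ext i j
    fin_cases i <;> fin_cases j <;> simp
  exact fun x => ⟨_, congr($hVW x)⟩

theorem adjoint_Vex_comp_piEx_comp_Vex (g : Multiplicative ℤ) :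
    adjoint Vex ∘L piEx g ∘L Vex = toEuclideanCLM (𝕜 := ℂ)
      !![exp ((Multiplicative.toAdd g : ℤ) : ℂ), -exp ((Multiplicative.toAdd g : ℤ) : ℂ);
        -exp ((Multiplicative.toAdd g : ℤ) : ℂ),
        exp ((Multiplicative.toAdd g : ℤ) : ℂ) + exp (-((Multiplicative.toAdd g : ℤ) : ℂ))] := by
  rw [Vex, piEx, adjoint_toEuclideanCLM, toEuclideanCLM_comp, toEuclideanCLM_comp]
  congr 1
  ext i j
  fin_cases i <;> fin_cases j <;> simp [Matrix.mul_apply, Fin.sum_univ_two]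

theorem adjoint_Vex_comp_piEx_comp_Vex_ne :
    adjoint Vex ∘L piEx (Multiplicative.ofAdd (1 : ℤ)) ∘L Vex ≠
      adjoint Vex ∘L piEx (Multiplicative.ofAdd (-1 : ℤ)) ∘L Vex := by
  rw [adjoint_Vex_comp_piEx_comp_Vex, adjoint_Vex_comp_piEx_comp_Vex]
  intro h
  have h00 := congr_fun₂ (toEuclideanCLM.injective h) 0 0
  simp only [toAdd_ofAdd, Int.cast_one, Int.cast_neg, of_apply, cons_val', cons_val_zero,
    cons_val_fin_one] at h00
  rw [← ofReal_one, ← ofReal_neg, ← ofReal_exp, ← ofReal_exp, ofReal_inj] at h00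
  exact (Real.exp_lt_exp.2 (neg_one_lt_zero.trans one_pos)).ne' h00

open ContinuousLinearMap in
theorem counterexample_not_alphaCP :
    IsInvolution (Multiplicative ℤ) (fun g => g⁻¹) ∧
    adjoint Jex = Jex ∧ Jex ∘L Jex = 1 ∧
    piEx 1 = 1 ∧ (∀ g g', piEx (g * g') = piEx g ∘L piEx g') ∧
    (∀ g : Multiplicative ℤ, piEx g⁻¹ = Jex ∘L adjoint (piEx g) ∘L Jex) ∧
    (Submodule.span ℂ {x : EuclideanSpace ℂ (Fin 2) |
        ∃ g ξ, x = piEx g (Vex ξ)}).topologicalClosure = ⊤ ∧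
    (∀ n m : Multiplicative ℤ,
      adjoint Vex ∘L adjoint (piEx n) ∘L piEx m ∘L Vex =
        adjoint Vex ∘L piEx (n * m) ∘L Vex) ∧
    (adjoint Vex ∘L piEx (Multiplicative.ofAdd (1 : ℤ)) ∘L Vex ≠
      adjoint Vex ∘L piEx (Multiplicative.ofAdd (-1 : ℤ)) ∘L Vex) ∧
    ¬ IsAlphaCP (fun g : Multiplicative ℤ => g⁻¹)
        (fun g => adjoint Vex ∘L piEx g ∘L Vex) := by
  refine ⟨isInvolution_inv _, adjoint_Jex, Jex_comp_Jex, piEx_one, piEx_mul, piEx_inv,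
    Submodule.topologicalClosure_span_orbit_eq_top piEx piEx_one Vex_surjective,
    fun n m => by rw [adjoint_piEx, piEx_mul, comp_assoc], adjoint_Vex_comp_piEx_comp_Vex_ne,
    fun hφ => adjoint_Vex_comp_piEx_comp_Vex_ne ?_⟩
  simpa using (hφ.apply_alpha (Multiplicative.ofAdd (1 : ℤ))).symm
end
end

section
/- (Minimal Stinespring construction, uniqueness) Let φ : G → L(H) be α-completely positive with minimal Stinespring construction (π_φ, (H_φ, J_φ), V_φ). If π is a J-unitary representation of G on a Krein space (K, J) and V : H → K is bounded with φ(g) = V*π(g)V for all g, [π(G)VH] = K, and Jπ(g)V = π(α(g))V for all g, then there is a unitary U : H_φ → K with U J_φ = J U, U V_φ = V, and U π_φ(g) = π(g) U for all g ∈ G. -/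
open scoped ComplexOrder

noncomputable section

structure KreinDilation (G : Type*) [Group G] (α : G → G)
    (H : Type*) [NormedAddCommGroup H] [InnerProductSpace ℂ H] [CompleteSpace H]
    (φ : G → H →L[ℂ] H) where
  K : Type
  [nK : NormedAddCommGroup K]
  [iK : InnerProductSpace ℂ K]
  [cK : CompleteSpace K]
  J : K →L[ℂ] K
  rep : G → K →L[ℂ] K
  V : H →L[ℂ] K
  J_sa : ContinuousLinearMap.adjoint J = J
  J_inv : J ∘L J = 1
  rep_one : rep 1 = 1
  rep_mul : ∀ g g', rep (g * g') = rep g ∘L rep g'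
  rep_inv : ∀ g, rep g⁻¹ = J ∘L (ContinuousLinearMap.adjoint (rep g)) ∘L J
  eq : ∀ g, φ g = (ContinuousLinearMap.adjoint V) ∘L rep g ∘L V
  minimal : (Submodule.span ℂ {x : K | ∃ g ξ, x = rep g (V ξ)}).topologicalClosure = ⊤
  commJ : ∀ g, J ∘L rep g ∘L V = rep (α g) ∘L V

attribute [instance] KreinDilation.nK KreinDilation.iK KreinDilation.cK

/-!
The vectors `π(g) V ξ` span a dense subspace of `K`, and since `π(g)* = J π(g⁻¹) J` and
`J π(g) V = π(α g) V`, their Gram matrix `⟪π(g) V ξ, π(h) V η⟫ = ⟪ξ, φ(α(g⁻¹ α h)) η⟫` is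
determined by `φ` alone. Two total families in Hilbert spaces with the same Gram matrix are
matched by a unitary, and that unitary intertwines `J` and `π` because both act on each family by
the same reindexing.
-/

open Submodule Set
open scoped InnerProductSpace

section GramMatrix

variable {𝕜 ι E F : Type*} [RCLike 𝕜]
  [NormedAddCommGroup E] [InnerProductSpace 𝕜 E] [NormedAddCommGroup F] [InnerProductSpace 𝕜 F]
  {v : ι → E} {w : ι → F}

theorem inner_linearCombination_eq_of_inner_eq
    (hvw : ∀ i j, ⟪v i, v j⟫_𝕜 = ⟪w i, w j⟫_𝕜) (c d : ι →₀ 𝕜) :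
    ⟪Finsupp.linearCombination 𝕜 v c, Finsupp.linearCombination 𝕜 v d⟫_𝕜 =
      ⟪Finsupp.linearCombination 𝕜 w c, Finsupp.linearCombination 𝕜 w d⟫_𝕜 := by
  simp only [Finsupp.linearCombination_apply, Finsupp.sum, sum_inner, inner_sum, inner_smul_left,
    inner_smul_right, hvw]

theorem norm_linearCombination_eq_of_inner_eq
    (hvw : ∀ i j, ⟪v i, v j⟫_𝕜 = ⟪w i, w j⟫_𝕜) (c : ι →₀ 𝕜) :
    ‖Finsupp.linearCombination 𝕜 w c‖ = ‖Finsupp.linearCombination 𝕜 v c‖ := by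
  rw [@norm_eq_sqrt_re_inner 𝕜, @norm_eq_sqrt_re_inner 𝕜,
    inner_linearCombination_eq_of_inner_eq hvw]

theorem denseRange_linearCombination_of_dense_span {R M : Type*} [Semiring R] [AddCommMonoid M]
    [Module R M] [TopologicalSpace M] {u : ι → M} (hu : Dense (span R (range u) : Set M)) :
    DenseRange (Finsupp.linearCombination R u) := by
  rwa [DenseRange, ← LinearMap.coe_range, Finsupp.range_linearCombination]

theorem exists_linearIsometryEquiv_of_inner_eq [CompleteSpace E] [CompleteSpace F]
    (hv : Dense (span 𝕜 (range v) : Set E)) (hw : Dense (span 𝕜 (range w) : Set F))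
    (hvw : ∀ i j, ⟪v i, v j⟫_𝕜 = ⟪w i, w j⟫_𝕜) :
    ∃ U : E ≃ₗᵢ[𝕜] F, ∀ i, U (v i) = w i := by
  have hv' := denseRange_linearCombination_of_dense_span hv
  have hw' := denseRange_linearCombination_of_dense_span hw
  have hnorm := norm_linearCombination_eq_of_inner_eq hvw
  refine ⟨(LinearEquiv.refl 𝕜 (ι →₀ 𝕜)).extendOfIsometry _ _ hv' hw' hnorm, fun i => ?_⟩
  simpa using
    (LinearEquiv.refl 𝕜 (ι →₀ 𝕜)).extendOfIsometry_eq _ _ hv' hw' hnorm (Finsupp.single i 1)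

end GramMatrix

namespace KreinDilation

variable {G : Type*} [Group G] {α : G → G}
  {H : Type*} [NormedAddCommGroup H] [InnerProductSpace ℂ H] [CompleteSpace H]
  {φ : G → H →L[ℂ] H} (D : KreinDilation G α H φ)

def repV (p : G × H) : D.K := D.rep p.1 (D.V p.2)

theorem dense_span_range_repV : Dense (span ℂ (range D.repV) : Set D.K) := by
  have hrange : range D.repV = {x | ∃ g ξ, x = D.rep g (D.V ξ)} := by
    ext x
    simp [repV, eq_comm]
  rw [hrange]
  exact dense_iff_topologicalClosure_eq_top.mpr D.minimal

theorem J_J_apply (x : D.K) : D.J (D.J x) = x :=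
  DFunLike.congr_fun D.J_inv x

theorem adjoint_rep (g : G) :
    ContinuousLinearMap.adjoint (D.rep g) = D.J ∘L D.rep g⁻¹ ∘L D.J := by
  ext x
  simp [D.rep_inv, J_J_apply]

theorem J_repV (g : G) (ξ : H) : D.J (D.repV (g, ξ)) = D.repV (α g, ξ) :=
  DFunLike.congr_fun (D.commJ g) ξ

theorem rep_repV (g h : G) (ξ : H) : D.rep g (D.repV (h, ξ)) = D.repV (g * h, ξ) := by
  simp [repV, D.rep_mul]

theorem repV_one (ξ : H) : D.repV (1, ξ) = D.V ξ := by
  simp [repV, D.rep_one]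

theorem inner_repV_repV (p q : G × H) :
    ⟪D.repV p, D.repV q⟫_ℂ = ⟪p.2, φ (α (p.1⁻¹ * α q.1)) q.2⟫_ℂ := by
  calc ⟪D.repV p, D.repV q⟫_ℂ
      = ⟪D.V p.2, D.J (D.rep p.1⁻¹ (D.J (D.repV q)))⟫_ℂ := by
        rw [repV, ← ContinuousLinearMap.adjoint_inner_right, adjoint_rep]; rfl
    _ = ⟪D.V p.2, D.repV (α (p.1⁻¹ * α q.1), q.2)⟫_ℂ := by
        rw [J_repV, rep_repV, J_repV]
    _ = ⟪p.2, φ (α (p.1⁻¹ * α q.1)) q.2⟫_ℂ := by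
        rw [repV, ← ContinuousLinearMap.adjoint_inner_right, D.eq]; rfl

theorem ext_repV {F : Type*} [NormedAddCommGroup F] [NormedSpace ℂ F] {f g : D.K →L[ℂ] F}
    (h : ∀ p, f (D.repV p) = g (D.repV p)) : f = g :=
  ContinuousLinearMap.ext_on D.dense_span_range_repV <| by
    rintro _ ⟨p, rfl⟩
    exact h p

end KreinDilation

theorem minimal_stinespring_unique_general {G : Type*} [Group G] (α : G → G)
    {H : Type*} [NormedAddCommGroup H] [InnerProductSpace ℂ H] [CompleteSpace H]
    (φ : G → H →L[ℂ] H)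
    (D D' : KreinDilation G α H φ) :
    ∃ U : D.K ≃ₗᵢ[ℂ] D'.K,
      (∀ x : D.K, U (D.J x) = D'.J (U x)) ∧
      (∀ ξ : H, U (D.V ξ) = D'.V ξ) ∧
      (∀ (g : G) (x : D.K), U (D.rep g x) = D'.rep g (U x)) := by
  obtain ⟨U, hU⟩ := exists_linearIsometryEquiv_of_inner_eq D.dense_span_range_repV
    D'.dense_span_range_repV fun p q => by rw [D.inner_repV_repV, D'.inner_repV_repV]
  let T : D.K →L[ℂ] D'.K := U.toContinuousLinearEquiv
  have hJ : T ∘L D.J = D'.J ∘L T :=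
    D.ext_repV fun ⟨g, ξ⟩ => by simp [T, KreinDilation.J_repV, hU]
  have hrep (g : G) : T ∘L D.rep g = D'.rep g ∘L T :=
    D.ext_repV fun ⟨h, ξ⟩ => by simp [T, KreinDilation.rep_repV, hU]
  refine ⟨U, DFunLike.congr_fun hJ, fun ξ => ?_, fun g => DFunLike.congr_fun (hrep g)⟩
  rw [← D.repV_one, ← D'.repV_one, hU]

theorem minimal_stinespring_unique {G : Type*} [Group G] (α : G → G)
    {H : Type*} [NormedAddCommGroup H] [InnerProductSpace ℂ H] [CompleteSpace H]
    (φ : G → H →L[ℂ] H) (hα : IsInvolution G α) (hφ : IsAlphaCP α φ)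
    (D D' : KreinDilation G α H φ) :
    ∃ U : D.K ≃ₗᵢ[ℂ] D'.K,
      (∀ x : D.K, U (D.J x) = D'.J (U x)) ∧
      (∀ ξ : H, U (D.V ξ) = D'.V ξ) ∧
      (∀ (g : G) (x : D.K), U (D.rep g x) = D'.rep g (U x)) :=
  minimal_stinespring_unique_general α φ D D'
end
end

section
/- (Contractive intertwiner) Let φ, ψ be α-completely positive with ψ ≤_u φ (λφ − ψ α-completely positive for some λ > 0), with minimal Stinespring constructions (π_φ, (H_φ, J_φ), V_φ) and (π_ψ, (H_ψ, J_ψ), V_ψ). Then there exists a bounded linear operator S : H_φ → H_ψ with ‖S‖² ≤ λ such that S(π_φ(g)V_φξ) = π_ψ(g)V_ψξ for all g ∈ G, ξ ∈ H; moreover S π_φ(g) = π_ψ(g) S for all g, S V_φ = V_ψ, and S J_φ = J_ψ S. -/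
open scoped ComplexOrder

noncomputable section

/-!
The vectors `π_φ(g) V_φ ξ` have Gram kernel `(g, g') ↦ φ(α(g)⁻¹ g')`, so the α-positivity of
`λφ - ψ` gives `‖∑ π_ψ(gᵢ) V_ψ ξᵢ‖² ≤ λ ‖∑ π_φ(gᵢ) V_φ ξᵢ‖²`. Hence
`∑ π_φ(gᵢ) V_φ ξᵢ ↦ ∑ π_ψ(gᵢ) V_ψ ξᵢ` is well defined and `√λ`-bounded on a subspace that is dense
by minimality, and extends to `S`. The remaining identities only need to be checked on the total
set of vectors `π_φ(g) V_φ ξ`, where they follow from `π(g) π(g') = π(g g')` and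
`J π(g) V = π(α g) V`.
-/

section

open ContinuousLinearMap
open scoped InnerProductSpace

variable {G : Type*} [Group G] {α : G → G}
  {H : Type*} [NormedAddCommGroup H] [InnerProductSpace ℂ H]

/-- The finite family `(gᵢ, ξᵢ)` of the α-positivity condition is encoded as `f : G →₀ H`. -/
def kernelForm (α : G → G) (Θ : G → H →L[ℂ] H) (f : G →₀ H) : ℂ :=
  ∑ i ∈ f.support, ∑ j ∈ f.support, ⟪Θ ((α i)⁻¹ * j) (f j), f i⟫_ℂ

lemma kernelForm_smul_sub (c : ℝ) (φ ψ : G → H →L[ℂ] H) (f : G →₀ H) :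
    kernelForm α (fun g => (c : ℂ) • φ g - ψ g) f = c * kernelForm α φ f - kernelForm α ψ f := by
  simp only [kernelForm, sub_apply, smul_apply, inner_sub_left, inner_smul_left,
    Complex.conj_ofReal, Finset.sum_sub_distrib, Finset.mul_sum]

lemma IsAlphaCP.kernelForm_nonneg [CompleteSpace H] {Θ : G → H →L[ℂ] H} (hΘ : IsAlphaCP α Θ)
    (f : G →₀ H) : 0 ≤ kernelForm α Θ f := by
  let e := f.support.equivFin
  have h := hΘ.2.1 f.support.card (fun k => e.symm k) (fun k => f (e.symm k))
  rw [Fintype.sum_equiv e.symm _ (fun i : f.support => ∑ j : f.support,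
      ⟪Θ ((α i)⁻¹ * j) (f j), f i⟫_ℂ) fun i => Fintype.sum_equiv e.symm _ _ fun _ => rfl] at h
  simp only [kernelForm, ← Finset.sum_coe_sort f.support]
  exact h

namespace KreinDilation

variable [CompleteSpace H] {φ : G → H →L[ℂ] H} (D : KreinDilation G α H φ)

lemma rep_rep_apply (g g' : G) (x : D.K) : D.rep g (D.rep g' x) = D.rep (g * g') x := by
  rw [D.rep_mul]; rfl

lemma J_rep_V_apply (g : G) (ξ : H) : D.J (D.rep g (D.V ξ)) = D.rep (α g) (D.V ξ) :=
  congr($(D.commJ g) ξ)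

lemma J_V_apply (hα1 : α 1 = 1) (ξ : H) : D.J (D.V ξ) = D.V ξ := by
  simpa [D.rep_one, hα1] using D.J_rep_V_apply 1 ξ

lemma adjoint_rep_inv_α_V_apply (hα : IsInvolution G α) (g : G) (ξ : H) :
    adjoint (D.rep (α g)⁻¹) (D.V ξ) = D.rep g (D.V ξ) := by
  have hJ : adjoint (D.rep (α g)⁻¹) = D.J ∘L D.rep (α g) ∘L D.J := by
    rw [D.rep_inv, adjoint_comp, adjoint_comp, adjoint_adjoint, D.J_sa, comp_assoc]
  rw [hJ, comp_apply, comp_apply, D.J_V_apply hα.2.1, D.J_rep_V_apply, hα.1]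

lemma inner_rep_V (hα : IsInvolution G α) (g g' : G) (ξ ξ' : H) :
    ⟪D.rep g' (D.V ξ'), D.rep g (D.V ξ)⟫_ℂ = ⟪φ ((α g)⁻¹ * g') ξ', ξ⟫_ℂ := by
  rw [← D.adjoint_rep_inv_α_V_apply hα g ξ, adjoint_inner_right, rep_rep_apply, D.eq,
    comp_apply, comp_apply, adjoint_inner_left]

def orbitMap : (G →₀ H) →ₗ[ℂ] D.K :=
  Finsupp.lsum ℂ fun g => (D.rep g ∘L D.V).toLinearMap

lemma orbitMap_single (g : G) (ξ : H) : D.orbitMap (Finsupp.single g ξ) = D.rep g (D.V ξ) := by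
  simp [orbitMap]

lemma norm_orbitMap_sq (hα : IsInvolution G α) (f : G →₀ H) :
    (‖D.orbitMap f‖ : ℂ) ^ 2 = kernelForm α φ f := by
  refine (inner_self_eq_norm_sq_to_K (𝕜 := ℂ) (D.orbitMap f)).symm.trans ?_
  rw [orbitMap, Finsupp.lsum_apply, Finsupp.sum, inner_sum]
  refine Finset.sum_congr rfl fun i _ => ?_
  rw [sum_inner]
  exact Finset.sum_congr rfl fun j _ => D.inner_rep_V hα i j (f i) (f j)

lemma range_orbitMap :
    LinearMap.range D.orbitMap = Submodule.span ℂ {x | ∃ g ξ, x = D.rep g (D.V ξ)} := by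
  refine le_antisymm ?_ (Submodule.span_le.mpr ?_)
  · rintro _ ⟨f, rfl⟩
    rw [orbitMap, Finsupp.lsum_apply]
    exact Submodule.sum_mem _ fun g _ => Submodule.subset_span ⟨g, f g, rfl⟩
  · rintro _ ⟨g, ξ, rfl⟩
    exact ⟨Finsupp.single g ξ, D.orbitMap_single g ξ⟩

lemma denseRange_orbitMap : DenseRange D.orbitMap := by
  rw [DenseRange, ← LinearMap.coe_range, range_orbitMap]
  exact Submodule.dense_iff_topologicalClosure_eq_top.mpr D.minimal

lemma ext_rep_V {E : Type*} [NormedAddCommGroup E] [NormedSpace ℂ E] {S T : D.K →L[ℂ] E}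
    (h : ∀ g ξ, S (D.rep g (D.V ξ)) = T (D.rep g (D.V ξ))) : S = T :=
  ext_on (Submodule.dense_iff_topologicalClosure_eq_top.mpr D.minimal) fun _ ⟨g, ξ, hx⟩ =>
    hx ▸ h g ξ

end KreinDilation

lemma KreinDilation.norm_orbitMap_le [CompleteSpace H] (hα : IsInvolution G α)
    {φ ψ : G → H →L[ℂ] H} (Dφ : KreinDilation G α H φ) (Dψ : KreinDilation G α H ψ) {l : ℝ}
    (hdom : IsAlphaCP α (fun g => (l : ℂ) • φ g - ψ g)) (f : G →₀ H) :
    ‖Dψ.orbitMap f‖ ≤ √l * ‖Dφ.orbitMap f‖ := by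
  have hsq : ‖Dψ.orbitMap f‖ ^ 2 ≤ l * ‖Dφ.orbitMap f‖ ^ 2 := by
    have h := hdom.kernelForm_nonneg f
    rw [kernelForm_smul_sub, ← Dφ.norm_orbitMap_sq hα, ← Dψ.norm_orbitMap_sq hα, sub_nonneg] at h
    exact_mod_cast h
  calc ‖Dψ.orbitMap f‖ = √(‖Dψ.orbitMap f‖ ^ 2) := (Real.sqrt_sq (norm_nonneg _)).symm
    _ ≤ √(l * ‖Dφ.orbitMap f‖ ^ 2) := Real.sqrt_le_sqrt hsq
    _ = √l * ‖Dφ.orbitMap f‖ := by rw [Real.sqrt_mul' _ (sq_nonneg _), Real.sqrt_sq (norm_nonneg _)]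

end

open ContinuousLinearMap in
theorem contractive_intertwiner_general {G : Type*} [Group G] (α : G → G)
    {H : Type*} [NormedAddCommGroup H] [InnerProductSpace ℂ H] [CompleteSpace H]
    (φ ψ : G → H →L[ℂ] H) (hα : IsInvolution G α)
    (Dφ : KreinDilation G α H φ) (Dψ : KreinDilation G α H ψ)
    (l : ℝ) (hl : 0 < l) (hdom : IsAlphaCP α (fun g => (l : ℂ) • φ g - ψ g)) :
    ∃ S : Dφ.K →L[ℂ] Dψ.K,
      ‖S‖ ^ 2 ≤ l ∧
      (∀ (g : G) (ξ : H), S (Dφ.rep g (Dφ.V ξ)) = Dψ.rep g (Dψ.V ξ)) ∧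
      (∀ g : G, S ∘L Dφ.rep g = Dψ.rep g ∘L S) ∧
      S ∘L Dφ.V = Dψ.V ∧
      S ∘L Dφ.J = Dψ.J ∘L S := by
  have hbound := Dφ.norm_orbitMap_le hα Dψ hdom
  set S := Dψ.orbitMap.extendOfNorm Dφ.orbitMap
  have hS (g : G) (ξ : H) : S (Dφ.rep g (Dφ.V ξ)) = Dψ.rep g (Dψ.V ξ) := by
    rw [← Dφ.orbitMap_single, ← Dψ.orbitMap_single,
      LinearMap.extendOfNorm_eq Dφ.denseRange_orbitMap ⟨_, hbound⟩]
  refine ⟨S, ?_, hS, fun g => Dφ.ext_rep_V fun g' ξ => ?_, ?_, Dφ.ext_rep_V fun g ξ => ?_⟩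
  · rw [← Real.le_sqrt (norm_nonneg S) hl.le]
    exact LinearMap.opNorm_extendOfNorm_le Dφ.denseRange_orbitMap (Real.sqrt_nonneg l) hbound
  · simp only [comp_apply, Dφ.rep_rep_apply, Dψ.rep_rep_apply, hS]
  · ext ξ
    simpa [Dφ.rep_one, Dψ.rep_one] using hS 1 ξ
  · simp only [comp_apply, Dφ.J_rep_V_apply, Dψ.J_rep_V_apply, hS]

open ContinuousLinearMap in
theorem contractive_intertwiner {G : Type*} [Group G] (α : G → G)
    {H : Type*} [NormedAddCommGroup H] [InnerProductSpace ℂ H] [CompleteSpace H]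
    (φ ψ : G → H →L[ℂ] H) (hα : IsInvolution G α)
    (hφ : IsAlphaCP α φ) (hψ : IsAlphaCP α ψ)
    (Dφ : KreinDilation G α H φ) (Dψ : KreinDilation G α H ψ)
    (l : ℝ) (hl : 0 < l) (hdom : IsAlphaCP α (fun g => (l : ℂ) • φ g - ψ g)) :
    ∃ S : Dφ.K →L[ℂ] Dψ.K,
      ‖S‖ ^ 2 ≤ l ∧
      (∀ (g : G) (ξ : H), S (Dφ.rep g (Dφ.V ξ)) = Dψ.rep g (Dψ.V ξ)) ∧
      (∀ g : G, S ∘L Dφ.rep g = Dψ.rep g ∘L S) ∧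
      S ∘L Dφ.V = Dψ.V ∧
      S ∘L Dφ.J = Dψ.J ∘L S :=
  contractive_intertwiner_general α φ ψ hα Dφ Dψ l hl hdom
end
end

section
/- Let G be a discrete group with involution α and let ψ₁, ψ₂, φ be α-completely positive maps. If ψ₁ ≤_u ψ₂ ≤_u φ, then λΔ_φ(ψ₂) − Δ_φ(ψ₁) ≥ 0 in L(H_φ), where λ > 0 is such that λψ₂ − ψ₁ is α-completely positive. -/
open scoped ComplexOrder

noncomputable section

open ContinuousLinearMap in
private lemma key_inner {G : Type*} [Group G] {α : G → G}
    {H : Type*} [NormedAddCommGroup H] [InnerProductSpace ℂ H] [CompleteSpace H]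
    {φ : G → H →L[ℂ] H} (D : KreinDilation G α H φ)
    (hα1 : α 1 = 1)
    (T : D.K →L[ℂ] D.K) (hTsa : IsSelfAdjoint T)
    (hcomm : ∀ g : G, T ∘L D.rep g = D.rep g ∘L T)
    (hJ : T ∘L D.J = D.J ∘L T)
    (ψ : G → H →L[ℂ] H)
    (hrep : ∀ g : G, ψ g = adjoint D.V ∘L T ∘L D.rep g ∘L D.V)
    (g g' : G) (ξ ξ' : H) :
    (inner ℂ (T (D.rep g' (D.V ξ'))) (D.rep g (D.V ξ)) : ℂ)
      = inner ℂ (ψ (g⁻¹ * α g') ξ') ξ := by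
  have hJJ : ∀ x, D.J (D.J x) = x := fun x => by
    have := congrArg (fun A => A x) D.J_inv
    simpa using this
  have hJV : ∀ η : H, D.J (D.V η) = D.V η := by
    intro η
    have := congrArg (fun A => A η) (D.commJ 1)
    simpa [D.rep_one, hα1] using this
  have hrepJ : ∀ (h : G) (η : H), D.J (D.rep h (D.V η)) = D.rep (α h) (D.V η) := by
    intro h η
    have := congrArg (fun A => A η) (D.commJ h)
    simpa using this
  have hadj : ∀ x, (adjoint (D.rep g)) x = D.J (D.rep g⁻¹ (D.J x)) := by
    intro x
    have h1 := congrArg (fun A => A (D.J x)) (D.rep_inv g)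
    simp only [ContinuousLinearMap.comp_apply] at h1
    rw [hJJ] at h1
    rw [h1, hJJ]
  have hcommadj : ∀ x, adjoint (D.rep g) (T x) = T (adjoint (D.rep g) x) := by
    intro x
    have h := congrArg ContinuousLinearMap.adjoint (hcomm g)
    rw [adjoint_comp, adjoint_comp, hTsa.adjoint_eq] at h
    exact congrArg (fun A => A x) h
  have hTJ : ∀ x, T (D.J x) = D.J (T x) := fun x => congrArg (fun A => A x) hJ
  have hJsa : ∀ (a b : D.K), (inner ℂ (D.J a) b : ℂ) = inner ℂ a (D.J b) := by
    intro a b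
    conv_lhs => rw [← D.J_sa]
    exact adjoint_inner_left D.J b a
  set w : D.K := D.rep (g⁻¹ * α g') (D.V ξ') with hw
  have step1 : adjoint (D.rep g) (T (D.rep g' (D.V ξ'))) = D.J (T w) := by
    rw [hcommadj, hadj, hrepJ]
    have : D.rep g⁻¹ (D.rep (α g') (D.V ξ')) = w := by
      rw [hw, D.rep_mul]; rfl
    rw [this, hTJ]
  calc (inner ℂ (T (D.rep g' (D.V ξ'))) (D.rep g (D.V ξ)) : ℂ)
      = inner ℂ (adjoint (D.rep g) (T (D.rep g' (D.V ξ')))) (D.V ξ) :=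
        (adjoint_inner_left (D.rep g) _ _).symm
    _ = inner ℂ (D.J (T w)) (D.V ξ) := by rw [step1]
    _ = inner ℂ (T w) (D.V ξ) := by rw [hJsa, hJV]
    _ = inner ℂ (adjoint D.V (T w)) ξ := (adjoint_inner_left D.V _ _).symm
    _ = inner ℂ (ψ (g⁻¹ * α g') ξ') ξ := by
        rw [hrep (g⁻¹ * α g')]
        rfl

open ContinuousLinearMap in
theorem radon_nikodym_monotone {G : Type*} [Group G] (α : G → G)
    {H : Type*} [NormedAddCommGroup H] [InnerProductSpace ℂ H] [CompleteSpace H]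
    (φ ψ₁ ψ₂ : G → H →L[ℂ] H) (hα : IsInvolution G α)
    (hφ : IsAlphaCP α φ) (hψ₁ : IsAlphaCP α ψ₁) (hψ₂ : IsAlphaCP α ψ₂)
    (l : ℝ) (hl : 0 < l) (h12 : IsAlphaCP α (fun g => (l : ℂ) • ψ₂ g - ψ₁ g))
    (h2φ : ∃ m > (0 : ℝ), IsAlphaCP α (fun g => (m : ℂ) • φ g - ψ₂ g))
    (D : KreinDilation G α H φ)
    (T₁ T₂ : D.K →L[ℂ] D.K)
    (hT₁ : T₁.IsPositive ∧ (∀ g : G, T₁ ∘L D.rep g = D.rep g ∘L T₁) ∧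
      T₁ ∘L D.J = D.J ∘L T₁)
    (hT₂ : T₂.IsPositive ∧ (∀ g : G, T₂ ∘L D.rep g = D.rep g ∘L T₂) ∧
      T₂ ∘L D.J = D.J ∘L T₂)
    (hrep₁ : ∀ g : G, ψ₁ g = adjoint D.V ∘L T₁ ∘L D.rep g ∘L D.V)
    (hrep₂ : ∀ g : G, ψ₂ g = adjoint D.V ∘L T₂ ∘L D.rep g ∘L D.V) :
    (((l : ℂ) • T₂) - T₁).IsPositive := by
  classical
  have hsa₁ : IsSelfAdjoint T₁ := hT₁.1.isSelfAdjoint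
  have hsa₂ : IsSelfAdjoint T₂ := hT₂.1.isSelfAdjoint
  have hlstar : star (l : ℂ) = (l : ℂ) := Complex.conj_ofReal l
  have hSsa : IsSelfAdjoint (((l : ℂ) • T₂) - T₁) := (IsSelfAdjoint.smul hlstar hsa₂).sub hsa₁
  refine ⟨ContinuousLinearMap.isSelfAdjoint_iff_isSymmetric.mp hSsa, fun x => ?_⟩
  set S : D.K →L[ℂ] D.K := ((l : ℂ) • T₂) - T₁ with hSdef
  have hCclosed : IsClosed {y : D.K | 0 ≤ S.reApplyInnerSelf y} :=
    isClosed_le continuous_const S.reApplyInnerSelf_continuous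
  let M : Submodule ℂ D.K :=
    { carrier := {y | ∃ n : ℕ, ∃ g : Fin n → G, ∃ ξ : Fin n → H,
        y = ∑ i, D.rep (g i) (D.V (ξ i))}
      add_mem' := by
        rintro a b ⟨n, g, ξ, rfl⟩ ⟨m, g', ξ', rfl⟩
        refine ⟨n + m, Fin.append g g', Fin.append ξ ξ', ?_⟩
        rw [Fin.sum_univ_add]
        simp [Fin.append_left, Fin.append_right]
      zero_mem' := ⟨0, Fin.elim0, Fin.elim0, by simp⟩
      smul_mem' := by
        rintro c a ⟨n, g, ξ, rfl⟩
        refine ⟨n, g, fun i => c • ξ i, ?_⟩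
        rw [Finset.smul_sum]
        simp }
  have hspan : Submodule.span ℂ {y : D.K | ∃ g ξ, y = D.rep g (D.V ξ)} ≤ M := by
    rw [Submodule.span_le]
    rintro y ⟨g, ξ, rfl⟩
    exact ⟨1, fun _ => g, fun _ => ξ, by simp⟩
  have hMmem : ∀ y ∈ M, ∃ n : ℕ, ∃ g : Fin n → G, ∃ ξ : Fin n → H,
      y = ∑ i, D.rep (g i) (D.V (ξ i)) := fun y hy => hy
  have hM : ∀ y ∈ M, 0 ≤ S.reApplyInnerSelf y := by
    intro y hy
    obtain ⟨n, g, ξ, rfl⟩ := hMmem y hy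
    have hpos := h12.2.1 n (fun i => α (g i)) ξ
    simp only [hα.1, ContinuousLinearMap.sub_apply, ContinuousLinearMap.smul_apply,
      inner_sub_left, inner_smul_left, Complex.conj_ofReal] at hpos
    have hinner : (inner ℂ (S (∑ i, D.rep (g i) (D.V (ξ i)))) (∑ i, D.rep (g i) (D.V (ξ i))) : ℂ)
        = ∑ i, ∑ j, ((l : ℂ) * inner ℂ (ψ₂ ((g i)⁻¹ * α (g j)) (ξ j)) (ξ i)
            - inner ℂ (ψ₁ ((g i)⁻¹ * α (g j)) (ξ j)) (ξ i)) := by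
      rw [map_sum, inner_sum]
      refine Finset.sum_congr rfl fun i _ => ?_
      rw [sum_inner]
      refine Finset.sum_congr rfl fun j _ => ?_
      simp only [hSdef, ContinuousLinearMap.sub_apply, ContinuousLinearMap.smul_apply,
        inner_sub_left, inner_smul_left, Complex.conj_ofReal,
        key_inner D hα.2.1 T₁ hsa₁ hT₁.2.1 hT₁.2.2 ψ₁ hrep₁,
        key_inner D hα.2.1 T₂ hsa₂ hT₂.2.1 hT₂.2.2 ψ₂ hrep₂]
    have h0 : (0 : ℂ) ≤ (inner ℂ (S (∑ i, D.rep (g i) (D.V (ξ i))))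
        (∑ i, D.rep (g i) (D.V (ξ i))) : ℂ) := by
      rw [hinner]; exact hpos
    have := (Complex.le_def.mp h0).1
    simpa only [ContinuousLinearMap.reApplyInnerSelf, Complex.zero_re, RCLike.re_to_complex] using this
  have hx : x ∈ closure ((Submodule.span ℂ {y : D.K | ∃ g ξ, y = D.rep g (D.V ξ)}) : Set D.K) := by
    rw [← Submodule.topologicalClosure_coe, D.minimal]
    trivial
  have hsubset : ((Submodule.span ℂ {y : D.K | ∃ g ξ, y = D.rep g (D.V ξ)}) : Set D.K)
      ⊆ {y : D.K | 0 ≤ S.reApplyInnerSelf y} := fun y hy => hM y (hspan hy)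
  exact closure_minimal hsubset hCclosed hx
end
end
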